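/- Let 0 < a ≤ b and for each i ∈ ℕ let γᵢ : ℝ → ℝ² be a C¹, 1-periodic map with constant speed ‖γᵢ'(s)‖ = Lᵢ for all s, where Lᵢ ∈ [a, b], with γᵢ(0) = 0, and satisfying the separation bound: for all s, t ∈ ℝ and each σ ∈ {+1, −1}, ‖γᵢ(t) − (γᵢ(s) + σ·J(γᵢ'(s))/Lᵢ)‖ ≥ 1. Then there is a subsequence of (γᵢ) converging uniformly on ℝ, together with its derivatives, to a C¹, 1-periodic map γ of constant speed L ∈ [a, b] with γ(0) = 0 which also satisfies the same separation bound (for all s, t and σ ∈ {+1, −1}, ‖γ(t) − (γ(s) + σ·J(γ'(s))/L)‖ ≥ 1). -/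

import Mathlib

/-!
The separation bound controls the curvature. Applied with `σ = ±1` it says that the chord
`c = γ t - γ s` satisfies `|⟪c, J γ'(s)⟫| ≤ L ‖c‖² / 2`, so in the plane both `γ'(s)` and `γ'(t)`
lie within `L ‖c‖` of `± L c / ‖c‖`. Hence either `‖γ'(t) - γ'(s)‖ ≤ 2 L ‖c‖` or the two
derivatives are nearly antipodal; for `|t - s| ≤ 1 / (4 L)` a continuity argument rules out the
second case, and `γ'` is `8 L²`-Lipschitz. With speeds in `[a, b]` this bound is uniform along the
sequence, so Arzelà–Ascoli on one period, applied to the pairs `(γᵢ, γᵢ')`, gives a subsequence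
converging in `C¹`; speed, periodicity, base point and the separation bound are closed conditions
and pass to the limit.
-/

noncomputable section

/-- Rotation by π/2 in the plane: `J (x, y) = (-y, x)`. -/
def J (v : EuclideanSpace ℝ (Fin 2)) : EuclideanSpace ℝ (Fin 2) := WithLp.toLp 2 ![-(v 1), v 0]

open RealInnerProductSpace Filter Set Topology NNReal

local notation "ℝ²" => EuclideanSpace ℝ (Fin 2)

lemma forall_lt_of_continuousOn_of_forall_ne {g : ℝ → ℝ} {a b c : ℝ}
    (hg : ContinuousOn g (Icc a b)) (ha : g a < c)
    (h : ∀ t ∈ Icc a b, (∀ u ∈ Icc a t, g u ≤ c) → g t ≠ c) : ∀ t ∈ Icc a b, g t < c := by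
  have hit {x : ℝ} (hx : x ∈ Icc a b) (hcx : c ≤ g x) : ∃ y ∈ Icc a x, g y = c :=
    intermediate_value_Icc hx.1 (hg.mono (Icc_subset_Icc_right hx.2)) ⟨ha.le, hcx⟩
  by_contra! hex
  obtain ⟨t, ht, hct⟩ := hex
  set B := Icc a b ∩ g ⁻¹' {c}
  have hBbdd : BddBelow B := ⟨a, fun y hy => hy.1.1⟩
  obtain ⟨y, hy, hgy⟩ := hit ht hct
  have hu : sInf B ∈ B :=
    (hg.preimage_isClosed_of_isClosed isClosed_Icc isClosed_singleton).csInf_mem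
      ⟨y, ⟨hy.1, hy.2.trans ht.2⟩, hgy⟩ hBbdd
  refine h _ hu.1 (fun x hx => ?_) hu.2
  by_contra! hgx
  have hxb : x ∈ Icc a b := ⟨hx.1, hx.2.trans hu.1.2⟩
  obtain ⟨z, hz, hgz⟩ := hit hxb hgx.le
  have : sInf B ≤ z := csInf_le hBbdd ⟨⟨hz.1, hz.2.trans hxb.2⟩, hgz⟩
  obtain rfl : z = x := le_antisymm hz.2 (hx.2.trans this)
  exact hgx.ne' hgz

lemma Function.Periodic.deriv {E : Type*} [NormedAddCommGroup E] [NormedSpace ℝ E]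
    {f : ℝ → E} {c : ℝ} (hf : Function.Periodic f c) : Function.Periodic (deriv f) c := by
  intro x
  rw [← deriv_comp_add_const, show (fun y => f (y + c)) = f from funext hf]

lemma Function.Periodic.comp_fract {α : Type*} {f : ℝ → α} (hf : Function.Periodic f 1)
    (x : ℝ) : f (Int.fract x) = f x := by
  simpa using hf.sub_int_mul_eq (x := x) ⌊x⌋

lemma Function.Periodic.of_tendsto {α E : Type*} [TopologicalSpace E] [T2Space E]
    {l : Filter α} [l.NeBot] {f : α → ℝ → E} {g : ℝ → E} {c : ℝ}
    (hf : ∀ n, Function.Periodic (f n) c) (hfg : ∀ x, Tendsto (fun n => f n x) l (𝓝 (g x))) :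
    Function.Periodic g c := fun x =>
  tendsto_nhds_unique (hfg (x + c)) (by simpa only [hf _ x] using hfg x)

lemma norm_le_of_lipschitzWith_of_periodic {E : Type*} [SeminormedAddCommGroup E] {f : ℝ → E}
    {K : ℝ≥0} (hf : LipschitzWith K f) (hper : Function.Periodic f 1) (h0 : f 0 = 0) (x : ℝ) :
    ‖f x‖ ≤ K := by
  calc ‖f x‖ = dist (f (Int.fract x)) (f 0) := by rw [hper.comp_fract, h0, dist_zero_right]
    _ ≤ K * dist (Int.fract x) 0 := hf.dist_le_mul _ _
    _ ≤ K * 1 := by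
      rw [Real.dist_0_eq_abs, abs_of_nonneg (Int.fract_nonneg x)]
      gcongr
      exact (Int.fract_lt_one x).le
    _ = K := mul_one _

theorem exists_strictMono_tendstoUniformly_of_periodic {E : Type*} [MetricSpace E]
    {f : ℕ → ℝ → E} {K : Set E} {C : ℝ≥0} (hK : IsCompact K) (hfK : ∀ n x, f n x ∈ K)
    (hf : ∀ n, LipschitzWith C (f n)) (hper : ∀ n, Function.Periodic (f n) 1) :
    ∃ φ : ℕ → ℕ, StrictMono φ ∧ ∃ g : ℝ → E, TendstoUniformly (fun n => f (φ n)) g atTop := by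
  have : CompactSpace (Icc (0 : ℝ) 1) := isCompact_iff_compactSpace.mp isCompact_Icc
  let F : ℕ → BoundedContinuousFunction (Icc (0 : ℝ) 1) E := fun n =>
    .mkOfCompact ⟨fun x => f n x, (hf n).continuous.comp continuous_subtype_val⟩
  have hF : IsCompact (closure (range F)) := by
    refine BoundedContinuousFunction.arzela_ascoli K hK _ (by rintro _ x ⟨n, rfl⟩; exact hfK n x)
      (LipschitzWith.uniformEquicontinuous _ C ?_).equicontinuous
    rintro ⟨_, n, rfl⟩
    show LipschitzWith C (f n ∘ Subtype.val)
    simpa using (hf n).comp (LipschitzWith.subtype_val (Icc (0 : ℝ) 1))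
  obtain ⟨F', -, φ, hφ, hFF'⟩ := hF.tendsto_subseq fun n => subset_closure ⟨n, rfl⟩
  let fract01 (x : ℝ) : Icc (0 : ℝ) 1 := ⟨Int.fract x, Int.fract_nonneg x, (Int.fract_lt_one x).le⟩
  refine ⟨φ, hφ, F' ∘ fract01, ?_⟩
  convert (BoundedContinuousFunction.tendsto_iff_tendstoUniformly.mp hFF').comp fract01 with n
  funext x
  exact ((hper (φ n)).comp_fract x).symm

theorem exists_strictMono_tendstoUniformly_deriv_of_periodic {E : Type*} [NormedAddCommGroup E]
    [NormedSpace ℝ E] [ProperSpace E] {f : ℕ → ℝ → E} {B C : ℝ≥0}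
    (hf : ∀ n, Differentiable ℝ (f n)) (hper : ∀ n, Function.Periodic (f n) 1)
    (hf0 : ∀ n, f n 0 = 0) (hB : ∀ n x, ‖deriv (f n) x‖ ≤ B)
    (hC : ∀ n, LipschitzWith C (deriv (f n))) :
    ∃ φ : ℕ → ℕ, StrictMono φ ∧ ∃ g : ℝ → E, ContDiff ℝ 1 g ∧
      TendstoUniformly (fun n => f (φ n)) g atTop ∧
      TendstoUniformly (fun n => deriv (f (φ n))) (deriv g) atTop := by
  have hfB (n : ℕ) : LipschitzWith B (f n) :=
    lipschitzWith_of_nnnorm_deriv_le (hf n) fun x => by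
      rw [← NNReal.coe_le_coe, coe_nnnorm]; exact hB n x
  obtain ⟨φ, hφ, G, hG⟩ := exists_strictMono_tendstoUniformly_of_periodic
    (f := fun n x => (f n x, deriv (f n) x)) (C := max B C)
    ((isCompact_closedBall (0 : E) B).prod (isCompact_closedBall (0 : E) B))
    (fun n x => ⟨mem_closedBall_zero_iff.mpr
      (norm_le_of_lipschitzWith_of_periodic (hfB n) (hper n) (hf0 n) x),
      mem_closedBall_zero_iff.mpr (hB n x)⟩)
    (fun n => (hfB n).prodMk (hC n)) (fun n x => Prod.ext (hper n x) ((hper n).deriv x))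
  have hfG : TendstoUniformly (fun n => f (φ n)) (fun x => (G x).1) atTop :=
    uniformContinuous_fst.comp_tendstoUniformly hG
  have hf'G : TendstoUniformly (fun n => deriv (f (φ n))) (fun x => (G x).2) atTop :=
    uniformContinuous_snd.comp_tendstoUniformly hG
  have hG' (x : ℝ) : HasDerivAt (fun x => (G x).1) (G x).2 x :=
    hasDerivAt_of_tendstoUniformly hf'G (.of_forall fun n x => (hf (φ n) x).hasDerivAt)
      (fun x => hfG.tendsto_at x) x
  have hderiv : deriv (fun x => (G x).1) = fun x => (G x).2 := funext fun x => (hG' x).deriv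
  refine ⟨φ, hφ, _, contDiff_one_iff_deriv.mpr ⟨fun x => (hG' x).differentiableAt, ?_⟩, hfG,
    hderiv ▸ hf'G⟩
  exact hderiv ▸ hf'G.continuous (.of_forall fun n => (hC (φ n)).continuous)

@[simp] lemma J_apply_zero (v : ℝ²) : J v 0 = -v 1 := rfl

@[simp] lemma J_apply_one (v : ℝ²) : J v 1 = v 0 := rfl

lemma inner_eq_fin_two (x y : ℝ²) : ⟪x, y⟫ = x 0 * y 0 + x 1 * y 1 := by
  simp [PiLp.inner_apply, Fin.sum_univ_two, mul_comm]

lemma norm_sq_eq_fin_two (x : ℝ²) : ‖x‖ ^ 2 = x 0 ^ 2 + x 1 ^ 2 := by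
  simp [EuclideanSpace.norm_sq_eq, Fin.sum_univ_two]

lemma norm_J (v : ℝ²) : ‖J v‖ = ‖v‖ := by
  rw [← sq_eq_sq₀ (norm_nonneg _) (norm_nonneg _), norm_sq_eq_fin_two, norm_sq_eq_fin_two]
  simp only [J_apply_zero, J_apply_one]
  ring

lemma inner_sq_add_inner_J_sq (c v : ℝ²) :
    ⟪c, v⟫ ^ 2 + ⟪c, J v⟫ ^ 2 = ‖c‖ ^ 2 * ‖v‖ ^ 2 := by
  simp only [inner_eq_fin_two, norm_sq_eq_fin_two, J_apply_zero, J_apply_one]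
  ring

lemma continuous_J : Continuous J := by
  unfold J; fun_prop

lemma abs_inner_le_of_one_le_norm_sub_of_one_le_norm_add {F : Type*} [NormedAddCommGroup F]
    [InnerProductSpace ℝ F] {c n : F} (hn : ‖n‖ = 1) (h₁ : 1 ≤ ‖c - n‖) (h₂ : 1 ≤ ‖c + n‖) :
    |⟪c, n⟫| ≤ ‖c‖ ^ 2 / 2 := by
  have e₁ := norm_sub_sq_real c n
  have e₂ := norm_add_sq_real c n
  rw [hn] at e₁ e₂
  rw [abs_le]
  constructor <;> nlinarith

lemma exists_sign_norm_sub_smul_sq_le {e : ℝ²} (he : ‖e‖ = 1) (v : ℝ²) :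
    ∃ σ : ℝ, (σ = 1 ∨ σ = -1) ∧ ‖v - (σ * ‖v‖) • e‖ ^ 2 ≤ 2 * ⟪e, J v⟫ ^ 2 := by
  have hpyth := inner_sq_add_inner_J_sq e v
  rw [he, one_pow, one_mul] at hpyth
  have hXv : |⟪e, v⟫| ≤ ‖v‖ := by simpa [he] using abs_real_inner_le_norm e v
  have key : ‖v‖ * (‖v‖ - |⟪e, v⟫|) ≤ ⟪e, J v⟫ ^ 2 := by
    nlinarith [mul_le_mul_of_nonneg_left hXv (abs_nonneg ⟪e, v⟫), sq_abs ⟪e, v⟫]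
  have expand (σ : ℝ) (hσ : σ ^ 2 = 1) :
      ‖v - (σ * ‖v‖) • e‖ ^ 2 = 2 * ‖v‖ * (‖v‖ - σ * ⟪e, v⟫) := by
    rw [norm_sub_sq_real, inner_smul_right, norm_smul, real_inner_comm, he, mul_one,
      Real.norm_eq_abs, sq_abs]
    linear_combination ‖v‖ ^ 2 * hσ
  rcases le_total 0 ⟪e, v⟫ with h | h
  · refine ⟨1, Or.inl rfl, ?_⟩
    rw [expand 1 (by norm_num)]
    rw [abs_of_nonneg h] at key
    linarith
  · refine ⟨-1, Or.inr rfl, ?_⟩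
    rw [expand (-1) (by norm_num)]
    rw [abs_of_nonpos h] at key
    linarith

lemma norm_sub_le_or_norm_add_le_of_abs_inner_J_le {c v w : ℝ²} {L : ℝ} (hc : c ≠ 0)
    (hv : ‖v‖ = L) (hw : ‖w‖ = L) (hcv : |⟪c, J v⟫| ≤ L * ‖c‖ ^ 2 / 2)
    (hcw : |⟪c, J w⟫| ≤ L * ‖c‖ ^ 2 / 2) :
    ‖v - w‖ ≤ 2 * L * ‖c‖ ∨ ‖v + w‖ ≤ 2 * L * ‖c‖ := by
  have hc' : 0 < ‖c‖ := norm_pos_iff.mpr hc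
  set e := ‖c‖⁻¹ • c
  have he : ‖e‖ = 1 := norm_smul_inv_norm hc
  have near (u : ℝ²) (hu : ‖u‖ = L) (hcu : |⟪c, J u⟫| ≤ L * ‖c‖ ^ 2 / 2) :
      ∃ σ : ℝ, (σ = 1 ∨ σ = -1) ∧ ‖u - (σ * L) • e‖ ≤ L * ‖c‖ := by
    obtain ⟨σ, hσ, hle⟩ := exists_sign_norm_sub_smul_sq_le he u
    refine ⟨σ, hσ, ?_⟩
    have heu : |⟪e, J u⟫| ≤ L * ‖c‖ / 2 := by
      rw [real_inner_smul_left, abs_mul, abs_inv, abs_norm, inv_mul_le_iff₀ hc']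
      linarith
    have hL : 0 ≤ L := hu ▸ norm_nonneg u
    have hsq : ⟪e, J u⟫ ^ 2 ≤ (L * ‖c‖ / 2) ^ 2 := by
      rw [← sq_abs]; exact pow_le_pow_left₀ (abs_nonneg _) heu 2
    rw [hu] at hle
    apply pow_le_pow_iff_left₀ (norm_nonneg _) (by positivity) two_ne_zero |>.mp
    nlinarith
  obtain ⟨σ, hσ, hvσ⟩ := near v hv hcv
  obtain ⟨τ, hτ, hwτ⟩ := near w hw hcw
  have hsub := norm_sub_le (v - (σ * L) • e) (w - (τ * L) • e)
  have hadd := norm_add_le (v - (σ * L) • e) (w - (τ * L) • e)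
  rcases hσ with rfl | rfl <;> rcases hτ with rfl | rfl
  · left; simp only [sub_sub_sub_cancel_right] at hsub; linarith
  · right; rw [show v - (1 * L) • e + (w - (-1 * L) • e) = v + w by module] at hadd; linarith
  · right; rw [show v - (-1 * L) • e + (w - (1 * L) • e) = v + w by module] at hadd; linarith
  · left; simp only [sub_sub_sub_cancel_right] at hsub; linarith

lemma inner_sub_deriv_pos_of_norm_deriv_sub_le {E : Type*} [NormedAddCommGroup E]
    [InnerProductSpace ℝ E] {γ : ℝ → E} {L : ℝ} (hγ : Differentiable ℝ γ) (hL : 0 < L)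
    (hspeed : ∀ u, ‖deriv γ u‖ = L) {s t : ℝ} (hst : s < t)
    (h : ∀ u ∈ Icc s t, ‖deriv γ u - deriv γ s‖ ≤ L) : 0 < ⟪γ t - γ s, deriv γ s⟫ := by
  have hderiv (u : ℝ) :
      HasDerivAt (fun u => ⟪γ u, deriv γ s⟫) ⟪deriv γ u, deriv γ s⟫ u := by
    simpa using (hγ u).hasDerivAt.inner ℝ (hasDerivAt_const u (deriv γ s))
  have hpos (u : ℝ) (hu : u ∈ Icc s t) : 0 < ⟪deriv γ u, deriv γ s⟫ := by
    have := norm_sub_sq_real (deriv γ u) (deriv γ s)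
    rw [hspeed, hspeed] at this
    nlinarith [h u hu, norm_nonneg (deriv γ u - deriv γ s)]
  have hmono : StrictMonoOn (fun u => ⟪γ u, deriv γ s⟫) (Icc s t) :=
    strictMonoOn_of_deriv_pos (convex_Icc s t)
      (fun u _ => (hderiv u).continuousAt.continuousWithinAt)
      (fun u hu => (hderiv u).deriv ▸ hpos u (interior_subset hu))
  rw [inner_sub_left, sub_pos]
  exact hmono ⟨le_rfl, hst.le⟩ ⟨hst.le, le_rfl⟩ hst

/-- The open unit disks tangent to `γ` at each of its points contain no point of `γ`
(`L⁻¹ • J (deriv γ s)` is the unit normal of a curve of speed `L`). -/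
def SeparationBound (γ : ℝ → ℝ²) (L : ℝ) : Prop :=
  ∀ s t : ℝ, ∀ σ : ℝ, (σ = 1 ∨ σ = -1) → 1 ≤ ‖γ t - (γ s + σ • (L⁻¹ • J (deriv γ s)))‖

namespace SeparationBound

variable {γ : ℝ → ℝ²} {L : ℝ}

lemma abs_inner_J_deriv_le (hsep : SeparationBound γ L) (hL : 0 < L)
    (hspeed : ∀ s, ‖deriv γ s‖ = L) (s t : ℝ) :
    |⟪γ t - γ s, J (deriv γ s)⟫| ≤ L * ‖γ t - γ s‖ ^ 2 / 2 := by
  set n := L⁻¹ • J (deriv γ s)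
  have hn : ‖n‖ = 1 := by
    rw [norm_smul, norm_J, hspeed, Real.norm_eq_abs, abs_inv, abs_of_pos hL, inv_mul_cancel₀ hL.ne']
  have h₁ := hsep s t 1 (Or.inl rfl)
  have h₂ := hsep s t (-1) (Or.inr rfl)
  rw [one_smul, ← sub_sub] at h₁
  rw [neg_one_smul, ← sub_sub, sub_neg_eq_add] at h₂
  have hJ : J (deriv γ s) = L • n := by rw [smul_inv_smul₀ hL.ne']
  rw [hJ, real_inner_smul_right, abs_mul, abs_of_pos hL, mul_div_assoc]
  gcongr
  exact abs_inner_le_of_one_le_norm_sub_of_one_le_norm_add hn h₁ h₂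

lemma of_tendsto {ι : Type*} {l : Filter ι} [l.NeBot] {f : ι → ℝ → ℝ²} {Lf : ι → ℝ}
    {g : ℝ → ℝ²} (hsep : ∀ n, SeparationBound (f n) (Lf n)) (hL : Tendsto Lf l (𝓝 L))
    (hL0 : L ≠ 0) (hf : ∀ t, Tendsto (fun n => f n t) l (𝓝 (g t)))
    (hf' : ∀ t, Tendsto (fun n => deriv (f n) t) l (𝓝 (deriv g t))) :
    SeparationBound g L := fun s t σ hσ =>
  ge_of_tendsto (((hf t).sub ((hf s).add (((hL.inv₀ hL0).smul
    ((continuous_J.tendsto _).comp (hf' s))).const_smul σ))).norm)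
    (.of_forall fun n => hsep n s t σ hσ)

lemma norm_deriv_sub_le_or_le_norm_deriv_sub (hsep : SeparationBound γ L) (hL : 0 < L)
    (hspeed : ∀ s, ‖deriv γ s‖ = L) (hγ : Differentiable ℝ γ) {s t : ℝ} (hst : s < t)
    (h : ∀ u ∈ Icc s t, ‖deriv γ u - deriv γ s‖ ≤ L) :
    ‖deriv γ t - deriv γ s‖ ≤ 2 * L * ‖γ t - γ s‖ ∨
      2 * L - 2 * L * ‖γ t - γ s‖ ≤ ‖deriv γ t - deriv γ s‖ := by
  have hc : γ t - γ s ≠ 0 := by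
    intro hc
    simpa [hc] using inner_sub_deriv_pos_of_norm_deriv_sub_le hγ hL hspeed hst h
  have hct := hsep.abs_inner_J_deriv_le hL hspeed t s
  rw [← neg_sub, inner_neg_left, abs_neg, norm_neg] at hct
  refine (norm_sub_le_or_norm_add_le_of_abs_inner_J_le hc (hspeed t) (hspeed s) hct
    (hsep.abs_inner_J_deriv_le hL hspeed s t)).imp id fun hadd => ?_
  have := norm_sub_le (deriv γ t + deriv γ s) (deriv γ t - deriv γ s)
  rw [add_sub_sub_cancel, ← two_smul ℝ, norm_smul, hspeed, Real.norm_two] at this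
  linarith

lemma norm_deriv_sub_le (hsep : SeparationBound γ L) (hL : 0 < L)
    (hspeed : ∀ s, ‖deriv γ s‖ = L) (hγ : ContDiff ℝ 1 γ) {s t : ℝ} (hst : s ≤ t)
    (hts : t ≤ s + (4 * L)⁻¹) : ‖deriv γ t - deriv γ s‖ ≤ 2 * L ^ 2 * (t - s) := by
  have hdiff : Differentiable ℝ γ := hγ.differentiable one_ne_zero
  have hchord {u : ℝ} (hu : u ∈ Icc s (s + (4 * L)⁻¹)) : ‖γ u - γ s‖ ≤ L * (u - s) := by
    simpa [abs_of_nonneg (sub_nonneg.mpr hu.1)] using convex_univ.norm_image_sub_le_of_norm_deriv_le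
      (fun x _ => hdiff x) (fun x _ => (hspeed x).le) (mem_univ s) (mem_univ u)
  have hquarter {u : ℝ} (hu : u ∈ Icc s (s + (4 * L)⁻¹)) : ‖γ u - γ s‖ ≤ 1 / 4 :=
    calc ‖γ u - γ s‖ ≤ L * (u - s) := hchord hu
      _ ≤ L * (4 * L)⁻¹ := by gcongr; linarith [hu.2]
      _ = 1 / 4 := by field_simp
  -- Up to the first time it reaches `L`, `‖γ' u - γ' s‖` is `≤ L / 2` or `≥ 3 L / 2` by the
  -- dichotomy, so by continuity it never reaches `L`.
  have hsmall : ∀ u ∈ Icc s (s + (4 * L)⁻¹), ‖deriv γ u - deriv γ s‖ < L := by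
    refine forall_lt_of_continuousOn_of_forall_ne
      ((hγ.continuous_deriv le_rfl).sub continuous_const).norm.continuousOn (by simpa using hL) ?_
    intro u hu hle
    rcases hu.1.eq_or_lt with rfl | hsu
    · simpa using hL.ne
    have := hquarter hu
    rcases hsep.norm_deriv_sub_le_or_le_norm_deriv_sub hL hspeed hdiff hsu hle with h | h
    · exact (h.trans_lt (by nlinarith)).ne
    · exact (lt_of_lt_of_le (by nlinarith) h).ne'
  rcases hst.eq_or_lt with rfl | hst
  · simp
  rcases hsep.norm_deriv_sub_le_or_le_norm_deriv_sub hL hspeed hdiff hst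
    (fun u hu => (hsmall u ⟨hu.1, hu.2.trans hts⟩).le) with h | h
  · calc ‖deriv γ t - deriv γ s‖ ≤ 2 * L * ‖γ t - γ s‖ := h
      _ ≤ 2 * L * (L * (t - s)) := by gcongr; exact hchord ⟨hst.le, hts⟩
      _ = 2 * L ^ 2 * (t - s) := by ring
  · have := hquarter ⟨hst.le, hts⟩
    have := hsmall t ⟨hst.le, hts⟩
    nlinarith

lemma dist_deriv_le (hsep : SeparationBound γ L) (hL : 0 < L) (hspeed : ∀ s, ‖deriv γ s‖ = L)
    (hγ : ContDiff ℝ 1 γ) (x y : ℝ) : dist (deriv γ x) (deriv γ y) ≤ 8 * L ^ 2 * dist x y := by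
  wlog hxy : x ≤ y generalizing x y
  · rw [dist_comm, dist_comm x]
    exact this y x (le_of_not_ge hxy)
  rw [dist_comm, dist_eq_norm, dist_comm, Real.dist_eq, abs_of_nonneg (sub_nonneg.mpr hxy)]
  rcases le_or_gt y (x + (4 * L)⁻¹) with hnear | hfar
  · calc ‖deriv γ y - deriv γ x‖ ≤ 2 * L ^ 2 * (y - x) :=
          hsep.norm_deriv_sub_le hL hspeed hγ hxy hnear
      _ ≤ 8 * L ^ 2 * (y - x) :=
        mul_le_mul_of_nonneg_right (by nlinarith [sq_nonneg L]) (sub_nonneg.mpr hxy)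
  · calc ‖deriv γ y - deriv γ x‖ ≤ ‖deriv γ y‖ + ‖deriv γ x‖ := norm_sub_le _ _
      _ = 8 * L ^ 2 * (4 * L)⁻¹ := by rw [hspeed, hspeed]; field_simp; ring
      _ ≤ 8 * L ^ 2 * (y - x) := by gcongr; linarith

end SeparationBound

theorem compactness_of_separation_loops_general
    (a b : ℝ) (ha : 0 < a)
    (γ : ℕ → ℝ → EuclideanSpace ℝ (Fin 2)) (Lseq : ℕ → ℝ)
    (hC1 : ∀ i, ContDiff ℝ 1 (γ i))
    (hper : ∀ i, Function.Periodic (γ i) 1)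
    (hL : ∀ i, Lseq i ∈ Set.Icc a b)
    (hspeed : ∀ i s, ‖deriv (γ i) s‖ = Lseq i)
    (h0 : ∀ i, γ i 0 = 0)
    (hsep : ∀ i, ∀ s t : ℝ, ∀ σ : ℝ, (σ = 1 ∨ σ = -1) →
      1 ≤ ‖γ i t - (γ i s + σ • ((Lseq i)⁻¹ • J (deriv (γ i) s)))‖) :
    ∃ φ : ℕ → ℕ, StrictMono φ ∧
    ∃ g : ℝ → EuclideanSpace ℝ (Fin 2), ∃ L ∈ Set.Icc a b,
      ContDiff ℝ 1 g ∧ Function.Periodic g 1 ∧ g 0 = 0 ∧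
      (∀ s, ‖deriv g s‖ = L) ∧
      (∀ s t : ℝ, ∀ σ : ℝ, (σ = 1 ∨ σ = -1) →
        1 ≤ ‖g t - (g s + σ • (L⁻¹ • J (deriv g s)))‖) ∧
      TendstoUniformly (fun n => γ (φ n)) g Filter.atTop ∧
      TendstoUniformly (fun n => deriv (γ (φ n))) (deriv g) Filter.atTop := by
  have hLpos (i : ℕ) : 0 < Lseq i := ha.trans_le (hL i).1
  have hb : 0 ≤ b := (hLpos 0).le.trans (hL 0).2
  have hLb (i : ℕ) : 8 * Lseq i ^ 2 ≤ 8 * b ^ 2 := by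
    have := hLpos i; have := (hL i).2; gcongr
  obtain ⟨φ, hφ, g, hg, hγg, hγ'g⟩ :=
    exists_strictMono_tendstoUniformly_deriv_of_periodic (B := b.toNNReal)
      (C := (8 * b ^ 2).toNNReal) (fun i => (hC1 i).differentiable one_ne_zero) hper h0
      (fun i x => by rw [hspeed, Real.coe_toNNReal _ hb]; exact (hL i).2)
      (fun i => .of_dist_le_mul fun x y =>
        (SeparationBound.dist_deriv_le (hsep i) (hLpos i) (hspeed i) (hC1 i) x y).trans
          (by rw [Real.coe_toNNReal _ (by positivity)]
              exact mul_le_mul_of_nonneg_right (hLb i) dist_nonneg))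
  have hspeed_lim (s : ℝ) : Tendsto (fun n => Lseq (φ n)) atTop (𝓝 ‖deriv g s‖) := by
    simpa only [hspeed] using (hγ'g.tendsto_at s).norm
  have hLab : ‖deriv g 0‖ ∈ Icc a b :=
    isClosed_Icc.mem_of_tendsto (hspeed_lim 0) (.of_forall fun n => hL (φ n))
  refine ⟨φ, hφ, g, _, hLab, hg, .of_tendsto (fun n => hper (φ n)) hγg.tendsto_at,
    tendsto_nhds_unique (hγg.tendsto_at 0) (by simp [h0]),
    fun s => tendsto_nhds_unique (hspeed_lim s) (hspeed_lim 0),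
    SeparationBound.of_tendsto (fun n => hsep (φ n)) (hspeed_lim 0) (ha.trans_le hLab.1).ne'
      hγg.tendsto_at hγ'g.tendsto_at, hγg, hγ'g⟩

/-- **Compactness of loops satisfying the separation bound** (key step of
Theorems 3.3 and 4.1).  A sequence of C¹ `1`-periodic constant-speed loops based at
the origin, with speeds in `[a, b]` and satisfying the separation bound, has a
subsequence converging in C¹ (uniformly together with derivatives) to a C¹
`1`-periodic constant-speed loop which also satisfies the separation bound. -/
theorem compactness_of_separation_loops
    (a b : ℝ) (ha : 0 < a) (hab : a ≤ b)
    (γ : ℕ → ℝ → EuclideanSpace ℝ (Fin 2)) (Lseq : ℕ → ℝ)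
    (hC1 : ∀ i, ContDiff ℝ 1 (γ i))
    (hper : ∀ i, Function.Periodic (γ i) 1)
    (hL : ∀ i, Lseq i ∈ Set.Icc a b)
    (hspeed : ∀ i s, ‖deriv (γ i) s‖ = Lseq i)
    (h0 : ∀ i, γ i 0 = 0)
    (hsep : ∀ i, ∀ s t : ℝ, ∀ σ : ℝ, (σ = 1 ∨ σ = -1) →
      1 ≤ ‖γ i t - (γ i s + σ • ((Lseq i)⁻¹ • J (deriv (γ i) s)))‖) :
    ∃ φ : ℕ → ℕ, StrictMono φ ∧
    ∃ g : ℝ → EuclideanSpace ℝ (Fin 2), ∃ L ∈ Set.Icc a b,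
      ContDiff ℝ 1 g ∧ Function.Periodic g 1 ∧ g 0 = 0 ∧
      (∀ s, ‖deriv g s‖ = L) ∧
      (∀ s t : ℝ, ∀ σ : ℝ, (σ = 1 ∨ σ = -1) →
        1 ≤ ‖g t - (g s + σ • (L⁻¹ • J (deriv g s)))‖) ∧
      TendstoUniformly (fun n => γ (φ n)) g Filter.atTop ∧
      TendstoUniformly (fun n => deriv (γ (φ n))) (deriv g) Filter.atTop :=
  compactness_of_separation_loops_general a b ha γ Lseq hC1 hper hL hspeed h0 hsep

end
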